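/- arXiv:2002.05356 — 6 statements merged into one kernel-verified Lean document; each statement's English description precedes it below -/
import Mathlib

section
/- For each j ∈ {1,2}, the left projection π_L : 𝒞_j → ℝ⁴ is injective: if two elements of 𝒞_j have the same first component (s, x0, τ1, τ2) ∈ ℝ⁴, then they are equal. (This is the injectivity part of the semi-global Bolker assumption for the circle transform T_j.) -/
/-- The canonical relation `𝒞_j ⊆ ℝ⁴ × (ℝ² × ℝ²)` of the circle transform `T_j`
(`j ∈ {1,2}`), for scanning region `X = {2 − r_m < x2 < 1}`:
all pairs `((s, x0, (−1)^{j−1}σ(x1−x0), −σ((−1)^{j−1}s + x1 − x0)),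
((x1,x2), −σ((x1,x2) − c_j(s,x0))))` with `s > 0`, `σ ≠ 0` and
`(x1,x2) ∈ C_j(s,x0) ∩ X`, where `c_j(s,x0) = (x0 + (−1)^j s, 2)`. -/
def Crel (rm : ℝ) (j : ℕ) : Set ((ℝ × ℝ × ℝ × ℝ) × ((ℝ × ℝ) × (ℝ × ℝ))) :=
  {p | ∃ s x0 σ x1 x2 : ℝ, 0 < s ∧ σ ≠ 0 ∧
    (x1 - (x0 + (-1 : ℝ) ^ j * s)) ^ 2 + (x2 - 2) ^ 2 = s ^ 2 + 1 ∧
    2 - rm < x2 ∧ x2 < 1 ∧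
    p = ((s, x0, (-1 : ℝ) ^ (j - 1) * σ * (x1 - x0),
            -σ * ((-1 : ℝ) ^ (j - 1) * s + x1 - x0)),
         ((x1, x2), (-σ * (x1 - (x0 + (-1 : ℝ) ^ j * s)), -σ * (x2 - 2))))}

/-- The set `D = {((x1,x2),(ξ1,ξ2)) : 2 − r_m < x2 < 1, ξ2 ≠ 0}`. -/
def Dset (rm : ℝ) : Set ((ℝ × ℝ) × (ℝ × ℝ)) :=
  {v | 2 - rm < v.1.2 ∧ v.1.2 < 1 ∧ v.2.2 ≠ 0}

/-- For each `j ∈ {1,2}`, the left projection `π_L : 𝒞_j → ℝ⁴` is injective: two elements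
of `𝒞_j` with the same first component `(s, x0, τ1, τ2)` are equal (the injectivity part
of the semi-global Bolker assumption for the circle transform `T_j`). -/
theorem stmt3 (rm : ℝ) (hrm : 1 < rm) (j : ℕ) (hj : j ∈ ({1, 2} : Set ℕ)) :
    ∀ p ∈ Crel rm j, ∀ q ∈ Crel rm j, p.1 = q.1 → p = q := by

  rintro p ⟨s, x0, σ, x1, x2, hs, hσ, hc, hl, hu, rfl⟩
         q ⟨s', x0', σ', x1', x2', hs', hσ', hc', hl', hu', rfl⟩ h1
  simp only [Prod.mk.injEq] at h1 ⊢
  obtain ⟨hS, hX0, hT1, hT2⟩ := h1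
  subst hS; subst hX0
  set ε : ℝ := (-1 : ℝ) ^ (j - 1) with hεdef
  have hε : ε ≠ 0 := by
    have : (-1 : ℝ) ≠ 0 := by norm_num
    exact pow_ne_zero _ this
  have hε2 : ε ^ 2 = 1 := by
    rw [hεdef, ← pow_mul, mul_comm, pow_mul]; norm_num
  have hA : σ * (x1 - x0) = σ' * (x1' - x0) := by
    linear_combination ε * hT1 - (σ * (x1 - x0) - σ' * (x1' - x0)) * hε2
  have hσs : σ * (ε * s) = σ' * (ε * s) := by linear_combination -hT2 - hA
  have hσσ : σ = σ' := mul_right_cancel₀ (mul_ne_zero hε hs.ne') hσs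
  subst hσσ
  have hx1 : x1 = x1' := by
    have h := mul_left_cancel₀ hσ (show σ * (x1 - x0) = σ * (x1' - x0) from hA)
    linarith
  subst hx1
  have h2 : (x2 - x2') * (x2 + x2' - 4) = 0 := by linear_combination hc - hc'
  have hx2 : x2 = x2' := by
    rcases mul_eq_zero.mp h2 with h | h
    · linarith
    · linarith
  subst hx2
  simp
end

section
/- For each j ∈ {1,2}, the right projection π_R : 𝒞_j → ℝ² × ℝ², ((s,x0,τ1,τ2), (x,ξ)) ↦ (x,ξ), is injective, and its image is exactly the set D = {((x1,x2),(ξ1,ξ2)) : 2 − r_m < x2 < 1, ξ2 ≠ 0}. (First part of the paper's main theorem on the toric section transform.) -/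
/-!
The covector `ξ = -σ (x - c)` at a point `x` of the circle `|x - c|² = s² + 1` recovers all
parameters: since `x2 < 1` keeps `x2 - 2 ≠ 0`, its second component gives `σ`, its first then
gives `x1 - c1`, the circle equation gives `s² = |x - c|² - 1` and hence `s > 0`, and `c1`
gives `x0`. Conversely, any `(x, ξ)` with `ξ2 ≠ 0` arises this way, because
`|x - c|² ≥ (x2 - 2)² > 1` makes the prescribed `s²` positive. None of this depends on the
signs `(-1)^j`, `(-1)^(j-1)`, which are therefore replaced by arbitrary reals `e`, `e'`.
-/

def CrelSigned (rm e e' : ℝ) : Set ((ℝ × ℝ × ℝ × ℝ) × ((ℝ × ℝ) × (ℝ × ℝ))) :=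
  {p | ∃ s x0 σ x1 x2 : ℝ, 0 < s ∧ σ ≠ 0 ∧
    (x1 - (x0 + e * s)) ^ 2 + (x2 - 2) ^ 2 = s ^ 2 + 1 ∧
    2 - rm < x2 ∧ x2 < 1 ∧
    p = ((s, x0, e' * σ * (x1 - x0), -σ * (e' * s + x1 - x0)),
         ((x1, x2), (-σ * (x1 - (x0 + e * s)), -σ * (x2 - 2))))}

theorem one_lt_sub_two_sq {x : ℝ} (hx : x < 1) : 1 < (x - 2) ^ 2 := by
  nlinarith

namespace CrelSigned

variable {rm e e' : ℝ}

theorem injOn_snd : Set.InjOn Prod.snd (CrelSigned rm e e') := by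
  rintro _ ⟨s, x0, σ, x1, x2, hs, hσ, hc, -, hx2, rfl⟩
    _ ⟨s', x0', σ', _, _, hs', -, hc', -, -, rfl⟩ h
  simp only [Prod.mk.injEq] at h
  obtain ⟨⟨rfl, rfl⟩, hξ1, hξ2⟩ := h
  obtain rfl : σ = σ' := mul_right_cancel₀ (by linarith : x2 - 2 < 0).ne (by linarith)
  have hA : x1 - (x0 + e * s) = x1 - (x0' + e * s') := mul_left_cancel₀ (neg_ne_zero.2 hσ) hξ1
  obtain rfl : s = s' := by
    refine (pow_left_inj₀ hs.le hs'.le two_ne_zero).1 ?_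
    rw [hA] at hc
    linarith
  obtain rfl : x0 = x0' := by linarith
  rfl

theorem snd_image_subset : Prod.snd '' CrelSigned rm e e' ⊆ Dset rm := by
  rintro _ ⟨_, ⟨s, x0, σ, x1, x2, -, hσ, -, hx2l, hx2u, rfl⟩, rfl⟩
  exact ⟨hx2l, hx2u, mul_ne_zero (neg_ne_zero.2 hσ) (by linarith : x2 - 2 < 0).ne⟩

theorem subset_snd_image : Dset rm ⊆ Prod.snd '' CrelSigned rm e e' := by
  rintro ⟨⟨x1, x2⟩, ξ1, ξ2⟩ ⟨hx2l, hx2u, hξ2⟩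
  have hx2 : x2 - 2 ≠ 0 := (by linarith : x2 - 2 < 0).ne
  set σ := -ξ2 / (x2 - 2)
  set A := ξ1 / -σ
  have hs_sq_pos : 0 < A ^ 2 + (x2 - 2) ^ 2 - 1 := by
    nlinarith [sq_nonneg A, one_lt_sub_two_sq hx2u]
  set s := √(A ^ 2 + (x2 - 2) ^ 2 - 1)
  have hσ : σ ≠ 0 := div_ne_zero (neg_ne_zero.2 hξ2) hx2
  have hcenter : x1 - (x1 - e * s - A + e * s) = A := by ring
  refine ⟨_, ⟨s, x1 - e * s - A, σ, x1, x2, Real.sqrt_pos.2 hs_sq_pos, hσ, ?_, hx2l, hx2u, rfl⟩, ?_⟩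
  · rw [hcenter, Real.sq_sqrt hs_sq_pos.le]
    ring
  · rw [hcenter]
    simp only [Prod.mk.injEq, true_and, A, σ]
    constructor <;> field_simp

end CrelSigned

theorem stmt5_general (rm : ℝ) (j : ℕ) :
    (∀ p ∈ Crel rm j, ∀ q ∈ Crel rm j, p.2 = q.2 → p = q) ∧
    Prod.snd '' Crel rm j = Dset rm :=
  ⟨CrelSigned.injOn_snd, CrelSigned.snd_image_subset.antisymm CrelSigned.subset_snd_image⟩

/-- For each `j ∈ {1,2}`, the right projection `π_R : 𝒞_j → ℝ² × ℝ²` is injective, and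
its image is exactly `D = {((x1,x2),(ξ1,ξ2)) : 2 − r_m < x2 < 1, ξ2 ≠ 0}`. -/
theorem stmt5 (rm : ℝ) (hrm : 1 < rm) (j : ℕ) (hj : j ∈ ({1, 2} : Set ℕ)) :
    (∀ p ∈ Crel rm j, ∀ q ∈ Crel rm j, p.2 = q.2 → p = q) ∧
    Prod.snd '' Crel rm j = Dset rm :=
  stmt5_general rm j
end

section
/- Let ((x1,x2), (ξ1,ξ2)) ∈ D and j ∈ {1,2}. Set r = (2 − x2)√(ξ1² + ξ2²)/|ξ2|, s = √(r² − 1), x0 = x1 + ξ1(2 − x2)/ξ2 + (−1)^{j−1}s, σ = ξ2/(2 − x2), τ1 = (−1)^{j−1}σ(x1 − x0), and τ2 = −σ((−1)^{j−1}s + x1 − x0). Then r > 1 (so s > 0), (x1,x2) ∈ C_j(s,x0), (ξ1,ξ2) = −σ((x1,x2) − c_j(s,x0)), and ((s, x0, τ1, τ2), ((x1,x2),(ξ1,ξ2))) is the unique element of 𝒞_j whose right projection is ((x1,x2),(ξ1,ξ2)). -/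
theorem neg_one_pow_sub_one {R : Type*} [Ring R] {n : ℕ} (hn : n ≠ 0) :
    (-1 : R) ^ (n - 1) = -(-1) ^ n := by
  obtain ⟨k, rfl⟩ := Nat.exists_eq_succ_of_ne_zero hn
  simp [pow_succ]

theorem one_lt_mul_sqrt_div_abs {h a b : ℝ} (hh : 1 < h) (hb : b ≠ 0) :
    1 < h * √(a ^ 2 + b ^ 2) / |b| := by
  have hb_le : |b| ≤ √(a ^ 2 + b ^ 2) := Real.abs_le_sqrt (by nlinarith)
  rw [one_lt_div (abs_pos.mpr hb)]
  nlinarith [abs_pos.mpr hb]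

theorem circle_and_covector_of_center {x1 x2 ξ1 ξ2 s c σ : ℝ} (hx2 : x2 ≠ 2) (hξ2 : ξ2 ≠ 0)
    (hs : s ^ 2 = (2 - x2) ^ 2 * (ξ1 ^ 2 + ξ2 ^ 2) / ξ2 ^ 2 - 1)
    (hc : c = x1 + ξ1 * (2 - x2) / ξ2) (hσ : σ = ξ2 / (2 - x2)) :
    (x1 - c) ^ 2 + (x2 - 2) ^ 2 = s ^ 2 + 1 ∧
      (ξ1, ξ2) = ((-σ * (x1 - c), -σ * (x2 - 2)) : ℝ × ℝ) := by
  have h2x2 : 2 - x2 ≠ 0 := sub_ne_zero.mpr hx2.symm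
  subst hc hσ
  rw [hs, Prod.mk.injEq]
  refine ⟨?_, ?_, ?_⟩ <;> field_simp <;> ring

theorem Crel_injOn (rm : ℝ) (j : ℕ) : Set.InjOn Prod.snd (Crel rm j) := by
  rintro _ ⟨s, x0, σ, x1, x2, hs, hσ, hcirc, -, hx2, rfl⟩
    _ ⟨s', x0', σ', x1', x2', hs', -, hcirc', -, -, rfl⟩ hsnd
  simp only [Prod.mk.injEq] at hsnd
  obtain ⟨⟨rfl, rfl⟩, hξ1, hξ2⟩ := hsnd
  obtain rfl : σ = σ' :=
    neg_inj.mp (mul_right_cancel₀ (by linarith : x2 - 2 ≠ 0) hξ2)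
  have hcenter : x1 - (x0 + (-1) ^ j * s) = x1 - (x0' + (-1) ^ j * s') :=
    mul_left_cancel₀ (neg_ne_zero.mpr hσ) hξ1
  obtain rfl : s = s' := by
    rw [hcenter, hcirc'] at hcirc
    exact (pow_left_inj₀ hs.le hs'.le two_ne_zero).mp (by linarith)
  obtain rfl : x0 = x0' := by linarith
  rfl

theorem stmt6_general (rm : ℝ) (j : ℕ) (hj : j ∈ ({1, 2} : Set ℕ))
    (x1 x2 ξ1 ξ2 : ℝ) (hD : (((x1, x2), (ξ1, ξ2)) : (ℝ × ℝ) × (ℝ × ℝ)) ∈ Dset rm)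
    (r s x0 σ τ1 τ2 : ℝ)
    (hr : r = (2 - x2) * Real.sqrt (ξ1 ^ 2 + ξ2 ^ 2) / |ξ2|)
    (hs : s = Real.sqrt (r ^ 2 - 1))
    (hx0 : x0 = x1 + ξ1 * (2 - x2) / ξ2 + (-1 : ℝ) ^ (j - 1) * s)
    (hσ : σ = ξ2 / (2 - x2))
    (hτ1 : τ1 = (-1 : ℝ) ^ (j - 1) * σ * (x1 - x0))
    (hτ2 : τ2 = -σ * ((-1 : ℝ) ^ (j - 1) * s + x1 - x0)) :
    1 < r ∧ 0 < s ∧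
    (x1 - (x0 + (-1 : ℝ) ^ j * s)) ^ 2 + (x2 - 2) ^ 2 = s ^ 2 + 1 ∧
    (ξ1, ξ2) = ((-σ * (x1 - (x0 + (-1 : ℝ) ^ j * s)), -σ * (x2 - 2)) : ℝ × ℝ) ∧
    (((s, x0, τ1, τ2), ((x1, x2), (ξ1, ξ2))) :
        (ℝ × ℝ × ℝ × ℝ) × ((ℝ × ℝ) × (ℝ × ℝ))) ∈ Crel rm j ∧
    ∀ q ∈ Crel rm j, q.2 = ((x1, x2), (ξ1, ξ2)) →
      q = ((s, x0, τ1, τ2), ((x1, x2), (ξ1, ξ2))) := by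
  obtain ⟨hlo, hhi, hξ2⟩ := hD
  have hsign : (-1 : ℝ) ^ (j - 1) = -(-1) ^ j :=
    neg_one_pow_sub_one (by rcases hj with rfl | rfl <;> norm_num)
  have hr1 : 1 < r := hr ▸ one_lt_mul_sqrt_div_abs (by linarith) hξ2
  have hs2 : s ^ 2 = (2 - x2) ^ 2 * (ξ1 ^ 2 + ξ2 ^ 2) / ξ2 ^ 2 - 1 := by
    rw [hs, Real.sq_sqrt (by nlinarith), hr, div_pow, mul_pow,
      Real.sq_sqrt (by positivity), sq_abs]
  have hspos : 0 < s := hs ▸ Real.sqrt_pos.mpr (by nlinarith)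
  have hcenter : x0 + (-1) ^ j * s = x1 + ξ1 * (2 - x2) / ξ2 := by rw [hx0, hsign]; ring
  obtain ⟨hcirc, hcov⟩ :=
    circle_and_covector_of_center (by linarith) hξ2 hs2 hcenter hσ
  have hmem : (((s, x0, τ1, τ2), ((x1, x2), (ξ1, ξ2))) :
      (ℝ × ℝ × ℝ × ℝ) × ((ℝ × ℝ) × (ℝ × ℝ))) ∈ Crel rm j :=
    ⟨s, x0, σ, x1, x2, hspos, hσ ▸ div_ne_zero hξ2 (by linarith), hcirc, hlo, hhi,
      by rw [hτ1, hτ2, ← hcov]⟩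
  exact ⟨hr1, hspos, hcirc, hcov, hmem, fun q hq hq2 => Crel_injOn rm j hq hmem hq2⟩

/-- Explicit inverse of the right projection `π_R : 𝒞_j → D`.  For `((x1,x2),(ξ1,ξ2)) ∈ D`
and `j ∈ {1,2}`, with `r = (2−x2)√(ξ1²+ξ2²)/|ξ2|`, `s = √(r²−1)`,
`x0 = x1 + ξ1(2−x2)/ξ2 + (−1)^{j−1} s`, `σ = ξ2/(2−x2)`,
`τ1 = (−1)^{j−1}σ(x1−x0)`, `τ2 = −σ((−1)^{j−1}s + x1 − x0)`, one has `r > 1`,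
`(x1,x2) ∈ C_j(s,x0)`, `(ξ1,ξ2) = −σ((x1,x2) − c_j(s,x0))`, and
`((s,x0,τ1,τ2), ((x1,x2),(ξ1,ξ2)))` is the unique element of `𝒞_j` whose right
projection is `((x1,x2),(ξ1,ξ2))`. -/
theorem stmt6 (rm : ℝ) (hrm : 1 < rm) (j : ℕ) (hj : j ∈ ({1, 2} : Set ℕ))
    (x1 x2 ξ1 ξ2 : ℝ) (hD : (((x1, x2), (ξ1, ξ2)) : (ℝ × ℝ) × (ℝ × ℝ)) ∈ Dset rm)
    (r s x0 σ τ1 τ2 : ℝ)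
    (hr : r = (2 - x2) * Real.sqrt (ξ1 ^ 2 + ξ2 ^ 2) / |ξ2|)
    (hs : s = Real.sqrt (r ^ 2 - 1))
    (hx0 : x0 = x1 + ξ1 * (2 - x2) / ξ2 + (-1 : ℝ) ^ (j - 1) * s)
    (hσ : σ = ξ2 / (2 - x2))
    (hτ1 : τ1 = (-1 : ℝ) ^ (j - 1) * σ * (x1 - x0))
    (hτ2 : τ2 = -σ * ((-1 : ℝ) ^ (j - 1) * s + x1 - x0)) :
    1 < r ∧ 0 < s ∧
    (x1 - (x0 + (-1 : ℝ) ^ j * s)) ^ 2 + (x2 - 2) ^ 2 = s ^ 2 + 1 ∧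
    (ξ1, ξ2) = ((-σ * (x1 - (x0 + (-1 : ℝ) ^ j * s)), -σ * (x2 - 2)) : ℝ × ℝ) ∧
    (((s, x0, τ1, τ2), ((x1, x2), (ξ1, ξ2))) :
        (ℝ × ℝ × ℝ × ℝ) × ((ℝ × ℝ) × (ℝ × ℝ))) ∈ Crel rm j ∧
    ∀ q ∈ Crel rm j, q.2 = ((x1, x2), (ξ1, ξ2)) →
      q = ((s, x0, τ1, τ2), ((x1, x2), (ξ1, ξ2))) :=
  stmt6_general rm j hj x1 x2 ξ1 ξ2 hD r s x0 σ τ1 τ2 hr hs hx0 hσ hτ1 hτ2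
end

section
/- The canonical relations 𝒞_1 and 𝒞_2 are disjoint: 𝒞_1 ∩ 𝒞_2 = ∅. (This follows because any common element would force a point with x2 < 1 to lie on both circles C_1(s,x0) and C_2(s,x0), whereas these circles intersect only at the points (x0,1) and (x0,3).) -/
/-- The canonical relations `𝒞_1` and `𝒞_2` are disjoint: `𝒞_1 ∩ 𝒞_2 = ∅`. -/
theorem stmt8 (rm : ℝ) (hrm : 1 < rm) :
    Crel rm 1 ∩ Crel rm 2 = ∅ := by
  ext p
  simp only [Set.mem_inter_iff, Set.mem_empty_iff_false, iff_false, Crel, Set.mem_setOf_eq]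
  rintro ⟨⟨s, x0, σ, x1, x2, hs, hσ, hc1, hl1, hu1, rfl⟩,
          ⟨s', x0', σ', x1', x2', hs', hσ', hc2, hl2, hu2, heq⟩⟩
  simp only [Prod.mk.injEq] at heq
  obtain ⟨⟨hss, hxx, -, -⟩, ⟨hx1, hx2⟩, -, -⟩ := heq
  subst hss hxx hx1 hx2
  norm_num at hc1 hc2
  nlinarith [sq_nonneg (x1 - x0), sq_nonneg (x2 - 2), sq_nonneg s, mul_pos hs hs]
end

section
/- Let ((x1,x2), (ξ1,ξ2)) ∈ D. Set r = (2 − x2)√(ξ1² + ξ2²)/|ξ2|, s = √(r² − 1), x0 = x1 + ξ1(2 − x2)/ξ2 + s, σ = ξ2/(2 − x2), τ1 = σ(x1 − x0), τ2 = −σ(s + x1 − x0) (the parameters of the unique preimage of ((x1,x2),(ξ1,ξ2)) in 𝒞_1). Suppose ((y1,y2), (η1,η2)) ∈ ℝ² × ℝ² is such that ((s, x0, τ1, τ2), ((y1,y2),(η1,η2))) ∈ 𝒞_2. Then 2(x1 − x0) + s ≠ 0, and: y1 = s(x1 − x0)/(2(x1 − x0) + s) + x0, y2 = 2 − √(r²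 − (y1 − (x0 + s))²), and (η1,η2) = ((τ1 − τ2)/s)·((y1,y2) − c_2(s,x0)). (This is the explicit formula λ₁₂ for the nonlocal artefact produced by the composition 𝒞_2* ∘ 𝒞_1.) -/
theorem eq_of_mem_Crel_two {rm s x0 τ1 τ2 y1 y2 η1 η2 : ℝ}
    (h : (((s, x0, τ1, τ2), ((y1, y2), (η1, η2))) :
        (ℝ × ℝ × ℝ × ℝ) × ((ℝ × ℝ) × (ℝ × ℝ))) ∈ Crel rm 2) :
    0 < s ∧ τ1 - τ2 ≠ 0 ∧ y1 = s * τ1 / (τ1 - τ2) + x0 ∧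
    y2 = 2 - Real.sqrt (s ^ 2 + 1 - (y1 - (x0 + s)) ^ 2) ∧
    (η1, η2) = (((τ1 - τ2) / s * (y1 - (x0 + s)), (τ1 - τ2) / s * (y2 - 2)) : ℝ × ℝ) := by
  obtain ⟨s', x0', σ, y1', y2', hs, hσ, hcirc, -, hy2, heq⟩ := h
  simp only [Prod.mk.injEq] at heq
  obtain ⟨⟨rfl, rfl, hτ1, hτ2⟩, ⟨rfl, rfl⟩, rfl, rfl⟩ := heq
  norm_num at hcirc hτ1 hτ2
  have hτ : τ1 - τ2 = -σ * s := by rw [hτ1, hτ2]; ring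
  refine ⟨hs, ?_, ?_, ?_, ?_⟩
  · rw [hτ]
    exact mul_ne_zero (neg_ne_zero.mpr hσ) hs.ne'
  · rw [hτ, hτ1]
    field_simp
    ring
  · rw [← hcirc, add_sub_cancel_left, Real.sqrt_sq_eq_abs, abs_of_neg (by linarith)]
    ring
  · rw [hτ]
    field_simp

theorem stmt9_general (rm : ℝ)
    (x1 : ℝ)
    (r s x0 σ τ1 τ2 : ℝ)
    (hs : s = Real.sqrt (r ^ 2 - 1))
    (hτ1 : τ1 = σ * (x1 - x0))
    (hτ2 : τ2 = -σ * (s + x1 - x0))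
    (y1 y2 η1 η2 : ℝ)
    (h2 : (((s, x0, τ1, τ2), ((y1, y2), (η1, η2))) :
        (ℝ × ℝ × ℝ × ℝ) × ((ℝ × ℝ) × (ℝ × ℝ))) ∈ Crel rm 2) :
    2 * (x1 - x0) + s ≠ 0 ∧
    y1 = s * (x1 - x0) / (2 * (x1 - x0) + s) + x0 ∧
    y2 = 2 - Real.sqrt (r ^ 2 - (y1 - (x0 + s)) ^ 2) ∧
    (η1, η2) = (((τ1 - τ2) / s * (y1 - (x0 + s)),
                 (τ1 - τ2) / s * (y2 - 2)) : ℝ × ℝ) := by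
  obtain ⟨hs_pos, hτ_ne, hy1, hy2, hη⟩ := eq_of_mem_Crel_two h2
  have hτ : τ1 - τ2 = σ * (2 * (x1 - x0) + s) := by rw [hτ1, hτ2]; ring
  rw [hτ] at hτ_ne
  have hr : s ^ 2 + 1 = r ^ 2 := by
    rw [hs, Real.sq_sqrt (Real.sqrt_pos.mp (hs ▸ hs_pos)).le, sub_add_cancel]
  refine ⟨right_ne_zero_of_mul hτ_ne, ?_, hr ▸ hy2, hη⟩
  rw [hy1, hτ, hτ1, mul_left_comm, mul_div_mul_left _ _ (left_ne_zero_of_mul hτ_ne)]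

/-- Explicit formula `λ₁₂` for the nonlocal artefact produced by `𝒞_2* ∘ 𝒞_1`.
Starting from `((x1,x2),(ξ1,ξ2)) ∈ D` with the parameters `(s,x0,τ1,τ2)` of its unique
preimage in `𝒞_1`, any `((y1,y2),(η1,η2))` with `((s,x0,τ1,τ2),((y1,y2),(η1,η2))) ∈ 𝒞_2`
satisfies `2(x1−x0)+s ≠ 0`, `y1 = s(x1−x0)/(2(x1−x0)+s)+x0`,
`y2 = 2 − √(r² − (y1 − (x0+s))²)` and `(η1,η2) = ((τ1−τ2)/s)·((y1,y2) − c_2(s,x0))`. -/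
theorem stmt9 (rm : ℝ) (hrm : 1 < rm)
    (x1 x2 ξ1 ξ2 : ℝ) (hD : (((x1, x2), (ξ1, ξ2)) : (ℝ × ℝ) × (ℝ × ℝ)) ∈ Dset rm)
    (r s x0 σ τ1 τ2 : ℝ)
    (hr : r = (2 - x2) * Real.sqrt (ξ1 ^ 2 + ξ2 ^ 2) / |ξ2|)
    (hs : s = Real.sqrt (r ^ 2 - 1))
    (hx0 : x0 = x1 + ξ1 * (2 - x2) / ξ2 + s)
    (hσ : σ = ξ2 / (2 - x2))
    (hτ1 : τ1 = σ * (x1 - x0))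
    (hτ2 : τ2 = -σ * (s + x1 - x0))
    (y1 y2 η1 η2 : ℝ)
    (h2 : (((s, x0, τ1, τ2), ((y1, y2), (η1, η2))) :
        (ℝ × ℝ × ℝ × ℝ) × ((ℝ × ℝ) × (ℝ × ℝ))) ∈ Crel rm 2) :
    2 * (x1 - x0) + s ≠ 0 ∧
    y1 = s * (x1 - x0) / (2 * (x1 - x0) + s) + x0 ∧
    y2 = 2 - Real.sqrt (r ^ 2 - (y1 - (x0 + s)) ^ 2) ∧
    (η1, η2) = (((τ1 - τ2) / s * (y1 - (x0 + s)),
                 (τ1 - τ2) / s * (y2 - 2)) : ℝ × ℝ) :=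
  stmt9_general rm x1 r s x0 σ τ1 τ2 hs hτ1 hτ2 y1 y2 η1 η2 h2
end

section
/- Let ((y1,y2), (η1,η2)) ∈ D. Set s = √((2 − y2)²(η1² + η2²)/η2² − 1), x0 = y1 + η1(2 − y2)/η2 − s, σ = η2/(2 − y2), τ1 = −σ(y1 − x0), τ2 = −σ(−s + y1 − x0) (the parameters of the unique preimage of ((y1,y2),(η1,η2)) in 𝒞_2). Suppose ((x1,x2), (ξ1,ξ2)) ∈ ℝ² × ℝ² is such that ((s, x0, τ1, τ2), ((x1,x2),(ξ1,ξ2))) ∈ 𝒞_1. Then s − 2(y1 − x0) ≠ 0, and: x1 = s(y1 − x0)/(s − 2(y1 − x0)) + x0, x2 = 2 − √(s² + 1 − (x1 − (x0 − s))²), and (ξ1,ξ2) = ((τ1 + τ2)/s)·((x1,x2) − c_1(s,x0)). (This is the explicit formula λ₂₁ for the nonlocal artefact produced by the composition 𝒞_1* ∘ 𝒞_2.) -/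
/-- Explicit formula `λ₂₁` for the nonlocal artefact produced by `𝒞_1* ∘ 𝒞_2`.
Starting from `((y1,y2),(η1,η2)) ∈ D` with the parameters `(s,x0,τ1,τ2)` of its unique
preimage in `𝒞_2`, any `((x1,x2),(ξ1,ξ2))` with `((s,x0,τ1,τ2),((x1,x2),(ξ1,ξ2))) ∈ 𝒞_1`
satisfies `s − 2(y1−x0) ≠ 0`, `x1 = s(y1−x0)/(s − 2(y1−x0)) + x0`,
`x2 = 2 − √(s² + 1 − (x1 − (x0−s))²)` and `(ξ1,ξ2) = ((τ1+τ2)/s)·((x1,x2) − c_1(s,x0))`. -/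
theorem stmt10 (rm : ℝ) (hrm : 1 < rm)
    (y1 y2 η1 η2 : ℝ) (hD : (((y1, y2), (η1, η2)) : (ℝ × ℝ) × (ℝ × ℝ)) ∈ Dset rm)
    (s x0 σ τ1 τ2 : ℝ)
    (hs : s = Real.sqrt ((2 - y2) ^ 2 * (η1 ^ 2 + η2 ^ 2) / η2 ^ 2 - 1))
    (hx0 : x0 = y1 + η1 * (2 - y2) / η2 - s)
    (hσ : σ = η2 / (2 - y2))
    (hτ1 : τ1 = -σ * (y1 - x0))
    (hτ2 : τ2 = -σ * (-s + y1 - x0))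
    (x1 x2 ξ1 ξ2 : ℝ)
    (h1 : (((s, x0, τ1, τ2), ((x1, x2), (ξ1, ξ2))) :
        (ℝ × ℝ × ℝ × ℝ) × ((ℝ × ℝ) × (ℝ × ℝ))) ∈ Crel rm 1) :
    s - 2 * (y1 - x0) ≠ 0 ∧
    x1 = s * (y1 - x0) / (s - 2 * (y1 - x0)) + x0 ∧
    x2 = 2 - Real.sqrt (s ^ 2 + 1 - (x1 - (x0 - s)) ^ 2) ∧
    (ξ1, ξ2) = (((τ1 + τ2) / s * (x1 - (x0 - s)),
                 (τ1 + τ2) / s * (x2 - 2)) : ℝ × ℝ) := by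
  obtain ⟨hy2a, hy2b, hη2⟩ := hD
  have h2y : (2 : ℝ) - y2 ≠ 0 := by simp at hy2b ⊢; linarith
  have hσ0 : σ ≠ 0 := by rw [hσ]; exact div_ne_zero hη2 h2y
  obtain ⟨s', x0', σ', x1', x2', hs', hσ', hcirc, hb1, hb2, hp⟩ := h1
  simp only [Prod.mk.injEq] at hp
  norm_num at hp
  obtain ⟨⟨hes, hex0, het1, het2⟩, ⟨hex1, hex2⟩, heξ1, heξ2⟩ := hp
  subst hes hex0 hex1 hex2
  norm_num at hcirc
  -- het1 : τ1 = σ' * (x1 - x0), het2 : τ2 = -σ' * (s + x1 - x0) (roughly)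
  have e1 : σ' * (x1 - x0) = -σ * (y1 - x0) := by linear_combination hτ1 - het1
  have e2 : -σ' * (s + x1 - x0) = -σ * (-s + y1 - x0) := by linear_combination hτ2 - het2
  have key : σ' * s = -σ * (s - 2 * (y1 - x0)) := by linear_combination -e1 - e2
  have hne : s - 2 * (y1 - x0) ≠ 0 := by
    intro h
    have : σ' * s = 0 := by rw [key, h, mul_zero]
    exact (mul_ne_zero hσ' (ne_of_gt hs')) this
  refine ⟨hne, ?_, ?_, ?_⟩
  · have hσs : -σ ≠ 0 := neg_ne_zero.mpr hσ0
    have hmain : (x1 - x0) * (s - 2 * (y1 - x0)) = s * (y1 - x0) := by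
      have h3 : -σ * ((x1 - x0) * (s - 2 * (y1 - x0))) = -σ * (s * (y1 - x0)) := by
        linear_combination s * e1 - (x1 - x0) * key
      exact mul_left_cancel₀ hσs h3
    have h4 : x1 - x0 = s * (y1 - x0) / (s - 2 * (y1 - x0)) := by
      rw [eq_div_iff hne]; linear_combination hmain
    linarith
  · have hsq : (2 - x2) ^ 2 = s ^ 2 + 1 - (x1 - (x0 - s)) ^ 2 := by
      linear_combination hcirc
    rw [← hsq, Real.sqrt_sq (by linarith)]
    ring
  · have hts : τ1 + τ2 = -σ' * s := by linear_combination het1 + het2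
    have ht : (τ1 + τ2) / s = -σ' := by
      rw [hts]; field_simp
    rw [ht]
    simp only [Prod.mk.injEq]
    constructor
    · linear_combination heξ1
    · linear_combination heξ2
end
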